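/- Let Δ ≥ 1 be a natural number, α > 0, N ≥ 0, and β ≥ (101/100)^(α/2). Place points v_i = (i, 0) and u_i = (i, 10Δ) in the Euclidean plane for i ∈ {1, …, Δ}, with each v_i assigned an arbitrary power P_i > 0. Then for every natural number T < Δ and every sequence S_1, …, S_T of sending sets with S_t ⊆ {v_1, …, v_Δ}, there exists an index i such that for every slot t, it is not the case that both v_i ∈ S_t and SINR_{u_i}(v_i) ≥ β (computed with respect to S_t). Consequently, no transmission schedule of fewer than Δ slots lets every receiver u_i obtain a message from its unique neighbor v_i, so the progress bound satisfies f_prog ≥ Δ even for a centrally computed optimal schedule with arbitrary transmission powers. -/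

import Mathlib

open scoped BigOperators
open scoped Classical

/-- The point `(x, y)` in the Euclidean plane. -/
noncomputable def pt (x y : ℝ) : EuclideanSpace ℝ (Fin 2) :=
  (WithLp.equiv 2 (Fin 2 → ℝ)).symm ![x, y]

/-- The SINR of sender `v` at receiver `u`, given a set `S` of simultaneously transmitting
sender positions in the Euclidean plane, powers `P`, path-loss exponent `α` and noise `N`. -/
noncomputable def sinr (α N : ℝ) (S : Finset (EuclideanSpace ℝ (Fin 2)))
    (P : EuclideanSpace ℝ (Fin 2) → ℝ) (u v : EuclideanSpace ℝ (Fin 2)) : ℝ :=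
  (P v * dist v u ^ (-α)) /
    ((∑ w ∈ S.filter fun w => w ≠ u ∧ w ≠ v, P w * dist w u ^ (-α)) + N)

/-!
Two senders `vᵢ ≠ vⱼ` transmitting in the same slot interfere at each other's receivers, and
`r = dist vⱼ uᵢ / dist vᵢ uᵢ = dist vᵢ uⱼ / dist vⱼ uⱼ` satisfies `r² < 101/100`, since the two
lines are `10Δ` apart while the senders are less than `Δ` apart. Hence `SINR_{uᵢ}(vᵢ) ≤ (Pᵢ/Pⱼ) r^α` and
`SINR_{uⱼ}(vⱼ) ≤ (Pⱼ/Pᵢ) r^α`; the powers cancel in the product, which is therefore below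
`(101/100)^α ≤ β²`, so at most one sender per slot succeeds. With fewer than `Δ` slots, some
sender never does, by pigeonhole.
-/

lemma dist_pt (a b c d : ℝ) :
    dist (pt a b) (pt c d) = Real.sqrt ((a - c) ^ 2 + (b - d) ^ 2) := by
  simp [pt, EuclideanSpace.dist_eq, Fin.sum_univ_two, Real.dist_eq, sq_abs]

lemma pt_injective {a b c d : ℝ} (h : pt a b = pt c d) : a = c ∧ b = d :=
  ⟨by simpa [pt] using congrArg (· 0) h, by simpa [pt] using congrArg (· 1) h⟩

lemma sinr_le_of_mem {α N : ℝ} {S : Finset (EuclideanSpace ℝ (Fin 2))}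
    {P : EuclideanSpace ℝ (Fin 2) → ℝ} {u v w : EuclideanSpace ℝ (Fin 2)}
    (hN : 0 ≤ N) (hP : ∀ x ∈ S, 0 ≤ P x) (hPv : 0 ≤ P v) (hPw : 0 < P w)
    (hw : w ∈ S) (hwu : w ≠ u) (hwv : w ≠ v) (hvu : v ≠ u) :
    sinr α N S P u v ≤ P v / P w * (dist w u / dist v u) ^ α := by
  have hdw : 0 < dist w u := dist_pos.mpr hwu
  have hdv : 0 < dist v u := dist_pos.mpr hvu
  have hw' : w ∈ S.filter fun x => x ≠ u ∧ x ≠ v := Finset.mem_filter.mpr ⟨hw, hwu, hwv⟩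
  have hsum : P w * dist w u ^ (-α) ≤
      ∑ x ∈ S.filter fun x => x ≠ u ∧ x ≠ v, P x * dist x u ^ (-α) :=
    Finset.single_le_sum (f := fun x => P x * dist x u ^ (-α))
      (fun x hx => mul_nonneg (hP x (Finset.mem_filter.mp hx).1) (Real.rpow_nonneg dist_nonneg _))
      hw'
  calc sinr α N S P u v ≤ P v * dist v u ^ (-α) / (P w * dist w u ^ (-α)) :=
        div_le_div_of_nonneg_left (by positivity) (by positivity) (by linarith)
    _ = P v / P w * (dist w u / dist v u) ^ α := by
        rw [Real.div_rpow hdw.le hdv.le, Real.rpow_neg hdw.le, Real.rpow_neg hdv.le]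
        field_simp

lemma dist_ratio_rpow_lt {α a b h : ℝ} (hα : 0 < α) (hh : h ≠ 0)
    (hab : (a - b) ^ 2 < h ^ 2 / 100) :
    (dist (pt b 0) (pt a h) / dist (pt a 0) (pt a h)) ^ α < ((101 : ℝ) / 100) ^ (α / 2) := by
  have hratio_sq : (dist (pt b 0) (pt a h) / dist (pt a 0) (pt a h)) ^ 2
      = ((b - a) ^ 2 + h ^ 2) / h ^ 2 := by
    rw [div_pow, dist_pt, dist_pt, Real.sq_sqrt (by positivity), Real.sq_sqrt (by positivity)]
    ring
  have hlt : (dist (pt b 0) (pt a h) / dist (pt a 0) (pt a h)) ^ 2 < 101 / 100 := by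
    rw [hratio_sq, div_lt_iff₀ (by positivity)]
    nlinarith
  calc (dist (pt b 0) (pt a h) / dist (pt a 0) (pt a h)) ^ α
      = ((dist (pt b 0) (pt a h) / dist (pt a 0) (pt a h)) ^ 2) ^ (α / 2) := by
        rw [← Real.rpow_natCast, ← Real.rpow_mul (by positivity)]
        ring_nf
    _ < ((101 : ℝ) / 100) ^ (α / 2) :=
        Real.rpow_lt_rpow (sq_nonneg _) hlt (by positivity)

lemma not_both_sinr_ge {α β N a b h : ℝ} {S : Finset (EuclideanSpace ℝ (Fin 2))}
    {P : EuclideanSpace ℝ (Fin 2) → ℝ} (hα : 0 < α) (hN : 0 ≤ N)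
    (hβ : ((101 : ℝ) / 100) ^ (α / 2) ≤ β) (hP : ∀ x ∈ S, 0 ≤ P x)
    (hPa : 0 < P (pt a 0)) (hPb : 0 < P (pt b 0)) (ha : pt a 0 ∈ S) (hb : pt b 0 ∈ S)
    (hne : a ≠ b) (hh : h ≠ 0) (hab : (a - b) ^ 2 < h ^ 2 / 100) :
    ¬ (β ≤ sinr α N S P (pt a h) (pt a 0) ∧ β ≤ sinr α N S P (pt b h) (pt b 0)) := by
  rintro ⟨hsa, hsb⟩
  have hoff {x y : ℝ} : pt x 0 ≠ pt y h := fun e => hh (pt_injective e).2.symm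
  have hdiff {x y : ℝ} (hxy : x ≠ y) : pt x 0 ≠ pt y 0 := fun e => hxy (pt_injective e).1
  have hra := dist_ratio_rpow_lt hα hh hab
  have hrb := dist_ratio_rpow_lt (h := h) hα hh (a := b) (b := a) (by linarith [sub_sq_comm a b])
  have hsym : dist (pt a 0) (pt b h) = dist (pt b 0) (pt a h) := by
    rw [dist_pt, dist_pt, sub_sq_comm]
  have hsame : dist (pt b 0) (pt b h) = dist (pt a 0) (pt a h) := by simp [dist_pt]
  rw [hsym, hsame] at hrb
  set r := (dist (pt b 0) (pt a h) / dist (pt a 0) (pt a h)) ^ α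
  set c := ((101 : ℝ) / 100) ^ (α / 2)
  have hc : 0 ≤ c := by positivity
  have hr : 0 ≤ r := by positivity
  have hboundA : sinr α N S P (pt a h) (pt a 0) ≤ P (pt a 0) / P (pt b 0) * r :=
    sinr_le_of_mem hN hP hPa.le hPb hb hoff (hdiff hne.symm) hoff
  have hboundB : sinr α N S P (pt b h) (pt b 0) ≤ P (pt b 0) / P (pt a 0) * r := by
    have := sinr_le_of_mem (α := α) (N := N) hN hP hPb.le hPa ha (hoff (y := b))
      (hdiff hne) (hoff (y := b))
    rwa [hsym, hsame] at this
  have hpowers : P (pt a 0) / P (pt b 0) * (P (pt b 0) / P (pt a 0)) = 1 := by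
    field_simp
  have : β * β < c * c := calc
    β * β ≤ P (pt a 0) / P (pt b 0) * r * (P (pt b 0) / P (pt a 0) * r) :=
        mul_le_mul (hsa.trans hboundA) (hsb.trans hboundB) (hc.trans hβ) (by positivity)
    _ = r * r := by rw [mul_mul_mul_comm, hpowers, one_mul]
    _ < c * c := mul_self_lt_mul_self hr hra
  nlinarith [mul_le_mul hβ hβ hc (hc.trans hβ)]

lemma sub_sq_lt_sq_of_mem_Icc {Δ i j : ℕ} (hi : i ∈ Finset.Icc 1 Δ) (hj : j ∈ Finset.Icc 1 Δ) :
    ((i : ℝ) - j) ^ 2 < (Δ : ℝ) ^ 2 := by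
  obtain ⟨hi1, hiΔ⟩ := Finset.mem_Icc.mp hi
  obtain ⟨hj1, hjΔ⟩ := Finset.mem_Icc.mp hj
  have hi1' : (1 : ℝ) ≤ i := by exact_mod_cast hi1
  have hiΔ' : (i : ℝ) ≤ Δ := by exact_mod_cast hiΔ
  have hj1' : (1 : ℝ) ≤ j := by exact_mod_cast hj1
  have hjΔ' : (j : ℝ) ≤ Δ := by exact_mod_cast hjΔ
  exact sq_lt_sq' (by linarith) (by linarith)

theorem stmt_5_general (Δ : ℕ) (α β N : ℝ) (hα : 0 < α) (hN : 0 ≤ N)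
    (hβ : ((101 : ℝ) / 100) ^ (α / 2) ≤ β)
    (P : EuclideanSpace ℝ (Fin 2) → ℝ)
    (hP : ∀ i ∈ Finset.Icc 1 Δ, 0 < P (pt i 0))
    (T : ℕ) (hT : T < Δ)
    (S : Fin T → Finset (EuclideanSpace ℝ (Fin 2)))
    (hS : ∀ t, S t ⊆ (Finset.Icc 1 Δ).image fun i : ℕ => pt i 0) :
    ∃ i ∈ Finset.Icc 1 Δ, ∀ t : Fin T,
      ¬ (pt i 0 ∈ S t ∧ β ≤ sinr α N (S t) P (pt i (10 * Δ)) (pt i 0)) := by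
  by_contra! hcon
  choose slot hslot using hcon
  obtain ⟨⟨i, hi⟩, ⟨j, hj⟩, hij, hslot_eq⟩ :=
    Fintype.exists_ne_map_eq_of_card_lt (fun x : Finset.Icc 1 Δ => slot x x.2)
      (by simpa using hT)
  simp only at hslot_eq
  have hPS : ∀ x ∈ S (slot i hi), 0 ≤ P x := fun x hx => by
    obtain ⟨k, hk, rfl⟩ := Finset.mem_image.mp (hS _ hx)
    exact (hP k hk).le
  have hΔ : (0 : ℝ) < Δ := by exact_mod_cast Nat.zero_lt_of_lt hT
  have hclose : ((i : ℝ) - j) ^ 2 < (10 * Δ) ^ 2 / 100 := by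
    linarith [sub_sq_lt_sq_of_mem_Icc hi hj]
  obtain ⟨hi_mem, hi_sinr⟩ := hslot i hi
  obtain ⟨hj_mem, hj_sinr⟩ := hslot j hj
  rw [← hslot_eq] at hj_mem hj_sinr
  exact not_both_sinr_ge hα hN hβ hPS (hP i hi) (hP j hj) hi_mem hj_mem
    (Nat.cast_injective.ne fun e => hij (Subtype.ext e)) (by positivity) hclose
    ⟨hi_sinr, hj_sinr⟩

/-- In the two-parallel-lines construction with senders `vᵢ = (i, 0)` and receivers
`uᵢ = (i, 10Δ)` for `i ∈ {1, …, Δ}`, with `β ≥ (101/100)^(α/2)` and arbitrary positive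
powers, any transmission schedule of `T < Δ` slots leaves some receiver `uᵢ` that never
successfully receives from its unique neighbor `vᵢ`: so `f_prog ≥ Δ` even for a centrally
computed optimal schedule with arbitrary powers. -/
theorem stmt_5 (Δ : ℕ) (hΔ : 1 ≤ Δ) (α β N : ℝ) (hα : 0 < α) (hN : 0 ≤ N)
    (hβ : ((101 : ℝ) / 100) ^ (α / 2) ≤ β)
    (P : EuclideanSpace ℝ (Fin 2) → ℝ)
    (hP : ∀ i ∈ Finset.Icc 1 Δ, 0 < P (pt i 0))
    (T : ℕ) (hT : T < Δ)
    (S : Fin T → Finset (EuclideanSpace ℝ (Fin 2)))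
    (hS : ∀ t, S t ⊆ (Finset.Icc 1 Δ).image fun i : ℕ => pt i 0) :
    ∃ i ∈ Finset.Icc 1 Δ, ∀ t : Fin T,
      ¬ (pt i 0 ∈ S t ∧ β ≤ sinr α N (S t) P (pt i (10 * Δ)) (pt i 0)) :=
  stmt_5_general Δ α β N hα hN hβ P hP T hT S hS
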